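/- arXiv:math/0106089 — 9 statements merged into one kernel-verified Lean document; each statement's English description precedes it below -/
import Mathlib

section
/- Let K be a field of characteristic 2 and let A, B ∈ K. A tuple (x₀,x₁,x₂,x₃,x₄) ∈ K⁵ satisfies the system x₁+x₂+x₃+x₄ = x₀, x₁³+x₂³+x₃³+x₄³ = A·x₀³, x₁⁵+x₂⁵+x₃⁵+x₄⁵ = B·x₀⁵ if and only if either (i) it satisfies σ₁ = x₀, σ₃ = (A+1)x₀³ + σ₂x₀, σ₄ = (B+A)x₀⁴ + (A+1)σ₂x₀², or (ii) x₀ = 0 and there is a partition {i,j} ∪ {k,l} = {1,2,3,4} with xᵢ + xⱼ = 0 and x_k + x_l = 0. -/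
/-- For a field `K` of characteristic 2 and `A B : K`, a tuple
`(x₀,x₁,x₂,x₃,x₄)` satisfies the power-sum system of the curve `C'` iff it
satisfies the equations of the curve `C` (via Newton's identities), or
`x₀ = 0` and the last four coordinates lie on one of the three lines
`xᵢ + xⱼ = x_k + x_l = 0` for a partition `{i,j} ∪ {k,l} = {1,2,3,4}`. -/
theorem coset_system_iff_curve_or_lines
    (K : Type*) [Field K] [CharP K 2] (A B : K) (x0 x1 x2 x3 x4 : K) :
    (x1 + x2 + x3 + x4 = x0 ∧
     x1 ^ 3 + x2 ^ 3 + x3 ^ 3 + x4 ^ 3 = A * x0 ^ 3 ∧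
     x1 ^ 5 + x2 ^ 5 + x3 ^ 5 + x4 ^ 5 = B * x0 ^ 5) ↔
    ((x1 + x2 + x3 + x4 = x0 ∧
      x1 * x2 * x3 + x1 * x2 * x4 + x1 * x3 * x4 + x2 * x3 * x4 =
        (A + 1) * x0 ^ 3 +
          (x1 * x2 + x1 * x3 + x1 * x4 + x2 * x3 + x2 * x4 + x3 * x4) * x0 ∧
      x1 * x2 * x3 * x4 =
        (B + A) * x0 ^ 4 +
          (A + 1) * (x1 * x2 + x1 * x3 + x1 * x4 + x2 * x3 + x2 * x4 + x3 * x4) *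
            x0 ^ 2) ∨
     (x0 = 0 ∧
      ((x1 + x2 = 0 ∧ x3 + x4 = 0) ∨
       (x1 + x3 = 0 ∧ x2 + x4 = 0) ∨
       (x1 + x4 = 0 ∧ x2 + x3 = 0)))) := by
  have h2 : (2 : K) = 0 := CharTwo.two_eq_zero
  constructor
  · rintro ⟨h1, h3, h5⟩
    by_cases hx0 : x0 = 0
    · subst hx0
      right
      have hx4 : x4 = x1 + x2 + x3 := by linear_combination h1 - (x1 + x2 + x3) * h2
      subst hx4
      have key : (x1 + x2) * ((x1 + x3) * (x2 + x3)) = 0 := by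
        linear_combination h3 + (-x3^3 - x2*x3^2 - x2^2*x3 - x2^3 - x1*x3^2 - 2*x1*x2*x3 - x1*x2^2 - x1^2*x3 - x1^2*x2 - x1^3) * h2
      refine ⟨rfl, ?_⟩
      rcases mul_eq_zero.mp key with h | h
      · exact Or.inl ⟨h, by linear_combination h + x3 * h2⟩
      · rcases mul_eq_zero.mp h with h | h
        · exact Or.inr (Or.inl ⟨h, by linear_combination h + x2 * h2⟩)
        · exact Or.inr (Or.inr ⟨by linear_combination h + x1 * h2, h⟩)
    · left
      subst h1
      refine ⟨rfl, ?_, ?_⟩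
      · linear_combination h3 + (-x4^3 - 2*x3*x4^2 - 2*x3^2*x4 - x3^3 - 2*x2*x4^2 - 4*x2*x3*x4 - 2*x2*x3^2 - 2*x2^2*x4 - 2*x2^2*x3 - x2^3 - 2*x1*x4^2 - 4*x1*x3*x4 - 2*x1*x3^2 - 4*x1*x2*x4 - 4*x1*x2*x3 - 2*x1*x2^2 - 2*x1^2*x4 - 2*x1^2*x3 - 2*x1^2*x2 - x1^3) * h2
      · have key := mul_left_cancel₀ hx0
          (b := x1 * x2 * x3 * x4)
          (c := (B + A) * (x1 + x2 + x3 + x4) ^ 4 +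
            (A + 1) * (x1 * x2 + x1 * x3 + x1 * x4 + x2 * x3 + x2 * x4 + x3 * x4) *
              (x1 + x2 + x3 + x4) ^ 2)
        apply key
        linear_combination h5 + (x4^2 + 3*x3*x4 + x3^2 + 3*x2*x4 + 3*x2*x3 + x2^2 + 3*x1*x4 + 3*x1*x3 + 3*x1*x2 + x1^2) * h3 + (-x4^5 - 2*x3*x4^4 - 2*x3^2*x4^3 - 2*x3^3*x4^2 - 2*x3^4*x4 - x3^5 - 2*x2*x4^4 - 5*x2*x3*x4^3 - 6*x2*x3^2*x4^2 - 5*x2*x3^3*x4 - 2*x2*x3^4 - 2*x2^2*x4^3 - 6*x2^2*x3*x4^2 - 6*x2^2*x3^2*x4 - 2*x2^2*x3^3 - 2*x2^3*x4^2 - 5*x2^3*x3*x4 - 2*x2^3*x3^2 - 2*x2^4*x4 - 2*x2^4*x3 - x2^5 - 2*x1*x4^4 - 5*x1*x3*x4^3 - 6*x1*x3^2*x4^2 - 5*x1*x3^3*x4 - 2*x1*x3^4 - 5*x1*x2*x4^3 - 13*x1*x2*x3*x4^2 - 13*x1*x2*x3^2*x4 - 5*x1*x2*x3^3 - 6*x1*x2^2*x4^2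 - 13*x1*x2^2*x3*x4 - 6*x1*x2^2*x3^2 - 5*x1*x2^3*x4 - 5*x1*x2^3*x3 - 2*x1*x2^4 - 2*x1^2*x4^3 - 6*x1^2*x3*x4^2 - 6*x1^2*x3^2*x4 - 2*x1^2*x3^3 - 6*x1^2*x2*x4^2 - 13*x1^2*x2*x3*x4 - 6*x1^2*x2*x3^2 - 6*x1^2*x2^2*x4 - 6*x1^2*x2^2*x3 - 2*x1^2*x2^3 - 2*x1^3*x4^2 - 5*x1^3*x3*x4 - 2*x1^3*x3^2 - 5*x1^3*x2*x4 - 5*x1^3*x2*x3 - 2*x1^3*x2^2 - 2*x1^4*x4 - 2*x1^4*x3 - 2*x1^4*x2 - x1^5) * h2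
  · rintro (⟨h1, g3, g4⟩ | ⟨hx0, hl⟩)
    · subst h1
      refine ⟨rfl, ?_, ?_⟩
      · linear_combination g3 + (x4^3 + 2*x3*x4^2 + 2*x3^2*x4 + x3^3 + 2*x2*x4^2 + 4*x2*x3*x4 + 2*x2*x3^2 + 2*x2^2*x4 + 2*x2^2*x3 + x2^3 + 2*x1*x4^2 + 4*x1*x3*x4 + 2*x1*x3^2 + 4*x1*x2*x4 + 4*x1*x2*x3 + 2*x1*x2^2 + 2*x1^2*x4 + 2*x1^2*x3 + 2*x1^2*x2 + x1^3) * h2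
      · linear_combination (x4^2 + 3*x3*x4 + x3^2 + 3*x2*x4 + 3*x2*x3 + x2^2 + 3*x1*x4 + 3*x1*x3 + 3*x1*x2 + x1^2) * g3 + (x1 + x2 + x3 + x4) * g4 +
          (x4^5 + x4^5*A + 4*x3*x4^4 + 6*x3*x4^4*A + 10*x3^2*x4^3 + 13*x3^2*x4^3*A + 10*x3^3*x4^2 + 13*x3^3*x4^2*A + 4*x3^4*x4 + 6*x3^4*x4*A + x3^5 + x3^5*A + 4*x2*x4^4 + 6*x2*x4^4*A + 21*x2*x3*x4^3 + 27*x2*x3*x4^3*A + 34*x2*x3^2*x4^2 + 42*x2*x3^2*x4^2*A + 21*x2*x3^3*x4 + 27*x2*x3^3*x4*A + 4*x2*x3^4 + 6*x2*x3^4*A + 10*x2^2*x4^3 + 13*x2^2*x4^3*A + 34*x2^2*x3*x4^2 + 42*x2^2*x3*x4^2*A + 34*x2^2*x3^2*x4 + 42*x2^2*x3^2*x4*A + 10*x2^2*x3^3 + 13*x2^2*x3^3*A + 10*x2^3*x4^2 + 13*x2^3*x4^2*A + 21*x2^3*x3*x4 + 27*x2^3*x3*x4*A + 10*x2^3*x3^2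 + 13*x2^3*x3^2*A + 4*x2^4*x4 + 6*x2^4*x4*A + 4*x2^4*x3 + 6*x2^4*x3*A + x2^5 + x2^5*A + 4*x1*x4^4 + 6*x1*x4^4*A + 21*x1*x3*x4^3 + 27*x1*x3*x4^3*A + 34*x1*x3^2*x4^2 + 42*x1*x3^2*x4^2*A + 21*x1*x3^3*x4 + 27*x1*x3^3*x4*A + 4*x1*x3^4 + 6*x1*x3^4*A + 21*x1*x2*x4^3 + 27*x1*x2*x4^3*A + 71*x1*x2*x3*x4^2 + 87*x1*x2*x3*x4^2*A + 71*x1*x2*x3^2*x4 + 87*x1*x2*x3^2*x4*A + 21*x1*x2*x3^3 + 27*x1*x2*x3^3*A + 34*x1*x2^2*x4^2 + 42*x1*x2^2*x4^2*A + 71*x1*x2^2*x3*x4 + 87*x1*x2^2*x3*x4*A + 34*x1*x2^2*x3^2 + 42*x1*x2^2*x3^2*A + 21*x1*x2^3*x4 + 27*x1*x2^3*x4*A + 21*x1*x2^3*x3 + 27*x1*x2^3*x3*A + 4*x1*x2^4 + 6*x1*x2^4*A + 10*x1^2*x4^3 + 13*x1^2*x4^3*A + 34*x1^2*x3*x4^2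 + 42*x1^2*x3*x4^2*A + 34*x1^2*x3^2*x4 + 42*x1^2*x3^2*x4*A + 10*x1^2*x3^3 + 13*x1^2*x3^3*A + 34*x1^2*x2*x4^2 + 42*x1^2*x2*x4^2*A + 71*x1^2*x2*x3*x4 + 87*x1^2*x2*x3*x4*A + 34*x1^2*x2*x3^2 + 42*x1^2*x2*x3^2*A + 34*x1^2*x2^2*x4 + 42*x1^2*x2^2*x4*A + 34*x1^2*x2^2*x3 + 42*x1^2*x2^2*x3*A + 10*x1^2*x2^3 + 13*x1^2*x2^3*A + 10*x1^3*x4^2 + 13*x1^3*x4^2*A + 21*x1^3*x3*x4 + 27*x1^3*x3*x4*A + 10*x1^3*x3^2 + 13*x1^3*x3^2*A + 21*x1^3*x2*x4 + 27*x1^3*x2*x4*A + 21*x1^3*x2*x3 + 27*x1^3*x2*x3*A + 10*x1^3*x2^2 + 13*x1^3*x2^2*A + 4*x1^4*x4 + 6*x1^4*x4*A + 4*x1^4*x3 + 6*x1^4*x3*A + 4*x1^4*x2 + 6*x1^4*x2*A + x1^5 + x1^5*A) * h2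
    · subst hx0
      rcases hl with ⟨ha, hb⟩ | ⟨ha, hb⟩ | ⟨ha, hb⟩
      · exact ⟨by linear_combination ha + hb,
          by linear_combination (x1^2 - x1*x2 + x2^2) * ha + (x3^2 - x3*x4 + x4^2) * hb,
          by linear_combination (x1^4 - x1^3*x2 + x1^2*x2^2 - x1*x2^3 + x2^4) * ha +
            (x3^4 - x3^3*x4 + x3^2*x4^2 - x3*x4^3 + x4^4) * hb⟩
      · exact ⟨by linear_combination ha + hb,
          by linear_combination (x1^2 - x1*x3 + x3^2) * ha + (x2^2 - x2*x4 + x4^2) * hb,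
          by linear_combination (x1^4 - x1^3*x3 + x1^2*x3^2 - x1*x3^3 + x3^4) * ha +
            (x2^4 - x2^3*x4 + x2^2*x4^2 - x2*x4^3 + x4^4) * hb⟩
      · exact ⟨by linear_combination ha + hb,
          by linear_combination (x1^2 - x1*x4 + x4^2) * ha + (x2^2 - x2*x3 + x3^2) * hb,
          by linear_combination (x1^4 - x1^3*x4 + x1^2*x4^2 - x1*x4^3 + x4^4) * ha +
            (x2^4 - x2^3*x3 + x2^2*x3^2 - x2*x3^3 + x3^4) * hb⟩
end

section
/- Let K be a field of characteristic 2, let A, B ∈ K and suppose λ := B + A² + A + 1 ≠ 0. Let (x₀,x₁,x₂,x₃,x₄) ∈ K⁵ be a nonzero tuple satisfying σ₁ = x₀, σ₃ = (A+1)x₀³ + σ₂x₀, σ₄ = (B+A)x₀⁴ + (A+1)σ₂x₀². Then the 3×5 matrix with rows (1,1,1,1,1), (A x₀², x₁², x₂², x₃², x₄²), (B x₀⁴, x₁⁴, x₂⁴, x₃⁴, x₄⁴) has rank at most 2 if and only if x₀ = 0 and there exist c ∈ K∖{0} and a partition {i,j} ∪ {k,l} = {1,2,3,4} with xᵢ =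 xⱼ = c and x_k = x_l = 0 (i.e. the projective point lies in the S₄-orbit of (0:1:1:0:0), which consists of exactly six points). -/
lemma addz {K : Type*} [Ring K] [CharP K 2] {a b : K} (h : a + b = 0) : a = b := by
  have := CharTwo.add_eq_iff_eq_add.mp h
  simpa using this

lemma aux_pair {K : Type*} [Field K] [CharP K 2] (A B x0 a b : K)
    (e1 : a + a + b + b = x0)
    (e4 : a * a * b * b =
      (B + A) * x0 ^ 4 + (A + 1) * (a ^ 2 + 4 * (a * b) + b ^ 2) * x0 ^ 2) :
    x0 = 0 ∧ (a = 0 ∨ b = 0) := by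
  have htwo : (2 : K) = 0 := CharTwo.two_eq_zero
  have hx0 : x0 = 0 := by linear_combination -e1 + (a + b) * htwo
  rw [hx0] at e4
  have h2 : (a * b) ^ 2 = 0 := by linear_combination e4
  exact ⟨hx0, mul_eq_zero.mp (sq_eq_zero_iff.mp h2)⟩

lemma aux_triple {K : Type*} [Field K] [CharP K 2] (A B x0 a b : K)
    (hlam : B + A ^ 2 + A + 1 ≠ 0)
    (hab : a ≠ b)
    (e1 : a + a + a + b = x0)
    (e3 : a ^ 3 + 3 * (a ^ 2 * b) = (A + 1) * x0 ^ 3 + (3 * a ^ 2 + 3 * (a * b)) * x0)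
    (e4 : a ^ 3 * b = (B + A) * x0 ^ 4 + (A + 1) * (3 * a ^ 2 + 3 * (a * b)) * x0 ^ 2) :
    False := by
  have htwo : (2 : K) = 0 := CharTwo.two_eq_zero
  have hx0 : x0 = a + b := by linear_combination -e1 + a * htwo
  rw [hx0] at e3 e4
  have hX : a + b ≠ 0 := fun h => hab (addz h)
  have e3' : a * b * (a + b) = (A + 1) * (a + b) ^ 3 := by
    linear_combination e3 + (2 * (a * b ^ 2) + 2 * (a ^ 2 * b) + a ^ 3) * htwo
  have hL : (B + A ^ 2 + A + 1) * (a + b) ^ 5 = 0 := by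
    linear_combination (a + b) * e4 + a ^ 2 * e3' + (A + 1) * (a + b) ^ 2 * e3' +
      (b ^ 5 + b ^ 5 * B + 2 * (b ^ 5 * A) + b ^ 5 * A ^ 2 + 6 * (a * b ^ 4) +
        5 * (a * b ^ 4 * B) + 11 * (a * b ^ 4 * A) + 5 * (a * b ^ 4 * A ^ 2) +
        15 * (a ^ 2 * b ^ 3) + 10 * (a ^ 2 * b ^ 3 * B) + 25 * (a ^ 2 * b ^ 3 * A) +
        10 * (a ^ 2 * b ^ 3 * A ^ 2) + 18 * (a ^ 3 * b ^ 2) + 10 * (a ^ 3 * b ^ 2 * B) +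
        29 * (a ^ 3 * b ^ 2 * A) + 10 * (a ^ 3 * b ^ 2 * A ^ 2) + 11 * (a ^ 4 * b) +
        5 * (a ^ 4 * b * B) + 17 * (a ^ 4 * b * A) + 5 * (a ^ 4 * b * A ^ 2) +
        3 * a ^ 5 + a ^ 5 * B + 4 * (a ^ 5 * A) + a ^ 5 * A ^ 2) * htwo
  rcases mul_eq_zero.mp hL with h | h
  · exact hlam h
  · exact hX (pow_eq_zero_iff (by norm_num) |>.mp h)

lemma aux_vand {K : Type*} [Field K] [CharP K 2] {u v w : K}
    (h : v ^ 2 * w ^ 4 - w ^ 2 * v ^ 4 - u ^ 2 * w ^ 4 + w ^ 2 * u ^ 4 +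
      u ^ 2 * v ^ 4 - v ^ 2 * u ^ 4 = 0) :
    u = v ∨ u = w ∨ v = w := by
  have htwo : (2 : K) = 0 := CharTwo.two_eq_zero
  have hsq : ((u + v) * ((u + w) * (v + w))) ^ 2 = 0 := by
    linear_combination h +
      (v ^ 3 * w ^ 3 + v ^ 4 * w ^ 2 + u * v * w ^ 4 + 3 * (u * v ^ 2 * w ^ 3) +
        3 * (u * v ^ 3 * w ^ 2) + u * v ^ 4 * w + u ^ 2 * w ^ 4 + 3 * (u ^ 2 * v * w ^ 3) +
        5 * (u ^ 2 * v ^ 2 * w ^ 2) + 3 * (u ^ 2 * v ^ 3 * w) + u ^ 3 * w ^ 3 +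
        3 * (u ^ 3 * v * w ^ 2) + 3 * (u ^ 3 * v ^ 2 * w) + u ^ 3 * v ^ 3 +
        u ^ 4 * v * w + u ^ 4 * v ^ 2) * htwo
  rcases mul_eq_zero.mp (sq_eq_zero_iff.mp hsq) with h' | h'
  · exact Or.inl (addz h')
  · rcases mul_eq_zero.mp h' with h'' | h''
    · exact Or.inr (Or.inl (addz h''))
    · exact Or.inr (Or.inr (addz h''))

/-- for `λ = B + A² + A + 1 ≠ 0`, a nonzero point of the curve `C`
is a singular point (the Jacobian matrix of the power-sum equations has rank
at most 2) iff `x₀ = 0` and the point lies in the `S₄`-orbit of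
`(0:1:1:0:0)`, i.e. there are `c ≠ 0` and a partition `{i,j} ∪ {k,l}` of
`{1,2,3,4}` with `xᵢ = xⱼ = c` and `x_k = x_l = 0`. -/
theorem singular_points_of_curve
    (K : Type*) [Field K] [CharP K 2] (A B : K)
    (hlam : B + A ^ 2 + A + 1 ≠ 0)
    (x0 x1 x2 x3 x4 : K)
    (hne : ¬(x0 = 0 ∧ x1 = 0 ∧ x2 = 0 ∧ x3 = 0 ∧ x4 = 0))
    (h1 : x1 + x2 + x3 + x4 = x0)
    (h3 : x1 * x2 * x3 + x1 * x2 * x4 + x1 * x3 * x4 + x2 * x3 * x4 =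
      (A + 1) * x0 ^ 3 +
        (x1 * x2 + x1 * x3 + x1 * x4 + x2 * x3 + x2 * x4 + x3 * x4) * x0)
    (h4 : x1 * x2 * x3 * x4 =
      (B + A) * x0 ^ 4 +
        (A + 1) * (x1 * x2 + x1 * x3 + x1 * x4 + x2 * x3 + x2 * x4 + x3 * x4) *
          x0 ^ 2) :
    Matrix.rank
        !![1, 1, 1, 1, 1;
           A * x0 ^ 2, x1 ^ 2, x2 ^ 2, x3 ^ 2, x4 ^ 2;
           B * x0 ^ 4, x1 ^ 4, x2 ^ 4, x3 ^ 4, x4 ^ 4] ≤ 2 ↔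
    (x0 = 0 ∧ ∃ c : K, c ≠ 0 ∧ ∃ σ : Equiv.Perm (Fin 4),
      ![x1, x2, x3, x4] (σ 0) = c ∧ ![x1, x2, x3, x4] (σ 1) = c ∧
      ![x1, x2, x3, x4] (σ 2) = 0 ∧ ![x1, x2, x3, x4] (σ 3) = 0) := by
  constructor
  · intro hrank
    have hsub : ∀ g : Fin 3 → Fin 5,
        ((!![1, 1, 1, 1, 1;
           A * x0 ^ 2, x1 ^ 2, x2 ^ 2, x3 ^ 2, x4 ^ 2;
           B * x0 ^ 4, x1 ^ 4, x2 ^ 4, x3 ^ 4, x4 ^ 4]).submatrix id g).det = 0 := by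
      intro g
      by_contra hd
      set M := !![(1:K), 1, 1, 1, 1;
           A * x0 ^ 2, x1 ^ 2, x2 ^ 2, x3 ^ 2, x4 ^ 2;
           B * x0 ^ 4, x1 ^ 4, x2 ^ 4, x3 ^ 4, x4 ^ 4] with hM
      have hsel : M.submatrix id g = M * (Matrix.of fun i j => if g j = i then (1:K) else 0) := by
        ext i j
        simp [Matrix.mul_apply, Matrix.submatrix_apply, mul_ite, mul_one, mul_zero]
      have h3r : (M.submatrix id g).rank = 3 := by
        rw [Matrix.rank_of_isUnit _ ((Matrix.isUnit_iff_isUnit_det _).2 (Ne.isUnit hd))]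
        simp
      have hle : (M.submatrix id g).rank ≤ M.rank := by
        rw [hsel]; exact Matrix.rank_mul_le_left _ _
      omega
    have v123 := hsub ![1,2,3]
    have v124 := hsub ![1,2,4]
    have v134 := hsub ![1,3,4]
    have v234 := hsub ![2,3,4]
    simp only [Matrix.det_fin_three, Matrix.submatrix_apply, id_eq, Matrix.cons_val_zero,
      Matrix.cons_val_one, Matrix.head_cons] at v123 v124 v134 v234
    simp [Matrix.det_fin_three, Matrix.submatrix_apply] at v123 v124 v134 v234
    have d123 := aux_vand v123
    have d124 := aux_vand v124
    have d134 := aux_vand v134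
    have d234 := aux_vand v234
    have hfin : (x1 = x2 ∧ x3 = x4) ∨ (x1 = x3 ∧ x2 = x4) ∨ (x1 = x4 ∧ x2 = x3) := by
      rcases d123 with h12 | h13 | h23
      · rcases d134 with h13 | h14 | h34
        · subst h12; subst h13
          by_cases hc : x4 = x1
          · exact Or.inl ⟨rfl, hc.symm⟩
          · exact (aux_triple A B x0 x1 x4 hlam (fun h => hc h.symm)
              (by linear_combination h1) (by linear_combination h3)
              (by linear_combination h4)).elim
        · subst h12; subst h14
          by_cases hc : x3 = x1
          · exact Or.inl ⟨rfl, hc⟩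
          · exact (aux_triple A B x0 x1 x3 hlam (fun h => hc h.symm)
              (by linear_combination h1) (by linear_combination h3)
              (by linear_combination h4)).elim
        · exact Or.inl ⟨h12, h34⟩
      · rcases d124 with h12 | h14 | h24
        · subst h13; subst h12
          by_cases hc : x4 = x1
          · exact Or.inl ⟨rfl, hc.symm⟩
          · exact (aux_triple A B x0 x1 x4 hlam (fun h => hc h.symm)
              (by linear_combination h1) (by linear_combination h3)
              (by linear_combination h4)).elim
        · subst h13; subst h14
          by_cases hc : x2 = x1
          · exact Or.inl ⟨hc.symm, rfl⟩
          · exact (aux_triple A B x0 x1 x2 hlam (fun h => hc h.symm)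
              (by linear_combination h1) (by linear_combination h3)
              (by linear_combination h4)).elim
        · exact Or.inr (Or.inl ⟨h13, h24⟩)
      · rcases d124 with h12 | h14 | h24
        · subst h12; subst h23
          by_cases hc : x4 = x1
          · exact Or.inl ⟨rfl, hc.symm⟩
          · exact (aux_triple A B x0 x1 x4 hlam (fun h => hc h.symm)
              (by linear_combination h1) (by linear_combination h3)
              (by linear_combination h4)).elim
        · exact Or.inr (Or.inr ⟨h14, h23⟩)
        · subst h23; subst h24
          by_cases hc : x1 = x2
          · exact Or.inl ⟨hc, rfl⟩
          · exact (aux_triple A B x0 x2 x1 hlam (fun h => hc h.symm)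
              (by linear_combination h1) (by linear_combination h3)
              (by linear_combination h4)).elim
    rcases hfin with ⟨hp, hq⟩ | ⟨hp, hq⟩ | ⟨hp, hq⟩
    · subst hp; subst hq
      obtain ⟨hx0, hab⟩ := aux_pair A B x0 x1 x3
        (by linear_combination h1) (by linear_combination h4)
      rcases hab with h | h <;> subst h
      · have hc : x3 ≠ 0 := fun h0 => hne ⟨hx0, rfl, rfl, h0, h0⟩
        exact ⟨hx0, x3, hc, ⟨![2,3,0,1], ![2,3,0,1], by decide, by decide⟩, rfl, rfl, rfl, rfl⟩
      · have hc : x1 ≠ 0 := fun h0 => hne ⟨hx0, h0, h0, rfl, rfl⟩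
        exact ⟨hx0, x1, hc, ⟨![0,1,2,3], ![0,1,2,3], by decide, by decide⟩, rfl, rfl, rfl, rfl⟩
    · subst hp; subst hq
      obtain ⟨hx0, hab⟩ := aux_pair A B x0 x1 x2
        (by linear_combination h1) (by linear_combination h4)
      rcases hab with h | h <;> subst h
      · have hc : x2 ≠ 0 := fun h0 => hne ⟨hx0, rfl, h0, rfl, h0⟩
        exact ⟨hx0, x2, hc, ⟨![1,3,0,2], ![2,0,3,1], by decide, by decide⟩, rfl, rfl, rfl, rfl⟩
      · have hc : x1 ≠ 0 := fun h0 => hne ⟨hx0, h0, rfl, h0, rfl⟩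
        exact ⟨hx0, x1, hc, ⟨![0,2,1,3], ![0,2,1,3], by decide, by decide⟩, rfl, rfl, rfl, rfl⟩
    · subst hp; subst hq
      obtain ⟨hx0, hab⟩ := aux_pair A B x0 x1 x2
        (by linear_combination h1) (by linear_combination h4)
      rcases hab with h | h <;> subst h
      · have hc : x2 ≠ 0 := fun h0 => hne ⟨hx0, rfl, h0, h0, rfl⟩
        exact ⟨hx0, x2, hc, ⟨![1,2,0,3], ![2,0,1,3], by decide, by decide⟩, rfl, rfl, rfl, rfl⟩
      · have hc : x1 ≠ 0 := fun h0 => hne ⟨hx0, h0, rfl, rfl, h0⟩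
        exact ⟨hx0, x1, hc, ⟨![0,3,1,2], ![0,2,3,1], by decide, by decide⟩, rfl, rfl, rfl, rfl⟩
  · rintro ⟨hx0, c, hc, σ, hs0, hs1, hs2, hs3⟩
    subst hx0
    have hall : ∀ i : Fin 4, ![x1, x2, x3, x4] i = c ∨ ![x1, x2, x3, x4] i = 0 := by
      intro i
      obtain ⟨k, hk⟩ : ∃ k, σ k = i := ⟨σ.symm i, σ.apply_symm_apply i⟩
      subst hk
      fin_cases k
      exacts [Or.inl hs0, Or.inl hs1, Or.inr hs2, Or.inr hs3]
    have hx1 : x1 = c ∨ x1 = 0 := hall 0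
    have hx2 : x2 = c ∨ x2 = 0 := hall 1
    have hx3 : x3 = c ∨ x3 = 0 := hall 2
    have hx4 : x4 = c ∨ x4 = 0 := hall 3
    have hsq : ∀ y : K, (y = c ∨ y = 0) → y ^ 4 = c ^ 2 * y ^ 2 := by
      rintro y (rfl | rfl) <;> ring
    have hfac : !![(1:K), 1, 1, 1, 1;
           A * (0:K) ^ 2, x1 ^ 2, x2 ^ 2, x3 ^ 2, x4 ^ 2;
           B * (0:K) ^ 4, x1 ^ 4, x2 ^ 4, x3 ^ 4, x4 ^ 4] =
        !![(1:K), 0; 0, 1; 0, c ^ 2] *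
          !![(1:K), 1, 1, 1, 1; 0, x1 ^ 2, x2 ^ 2, x3 ^ 2, x4 ^ 2] := by
      ext i j
      fin_cases i <;> fin_cases j <;>
        simp [Matrix.mul_apply, Fin.sum_univ_two, Matrix.vecHead, Matrix.vecTail,
          hsq _ hx1, hsq _ hx2, hsq _ hx3, hsq _ hx4]
    rw [hfac]
    exact le_trans (Matrix.rank_mul_le_left _ _)
      (le_trans (Matrix.rank_le_card_width _) (by simp))
end

section
/- Let K be an algebraically closed field of characteristic 2 and let A, B ∈ K. There exists a ∈ K satisfying both (A+1)a² + a + 1 = 0 and (B+A)a² + (A+1)a + (A+1) = 0 if and only if B + A² + A + 1 = 0. -/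
open Polynomial in
lemma exists_quad_root {K : Type*} [Field K] [IsAlgClosed K] (p q r : K) (hp : p ≠ 0) :
    ∃ a : K, p * a ^ 2 + q * a + r = 0 := by
  have hdeg : (C p * X ^ 2 + C q * X + C r).degree ≠ 0 := by
    have : (C p * X ^ 2 + C q * X + C r).degree = 2 := by
      compute_degree!
    simp [this]
  obtain ⟨a, ha⟩ := IsAlgClosed.exists_root _ hdeg
  exact ⟨a, by simpa using ha⟩

/-- over an algebraically closed field of characteristic 2, the
two quadratics `(A+1)a² + a + 1` and `(B+A)a² + (A+1)a + (A+1)` have a common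
root iff `λ = B + A² + A + 1 = 0` (their resultant is `λ²`). -/
theorem common_root_iff_lambda_zero
    (K : Type*) [Field K] [IsAlgClosed K] [CharP K 2] (A B : K) :
    (∃ a : K, (A + 1) * a ^ 2 + a + 1 = 0 ∧
      (B + A) * a ^ 2 + (A + 1) * a + (A + 1) = 0) ↔
    B + A ^ 2 + A + 1 = 0 := by
  have h2 : (2 : K) = 0 := by
    simpa using CharP.cast_eq_zero K 2
  constructor
  · rintro ⟨a, h1, h2'⟩
    have ha0 : a ≠ 0 := by
      rintro rfl
      simp at h1
    have key : (B + A ^ 2 + A + 1) * a ^ 2 = 0 := by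
      have := congrArg (fun x => (A + 1) * x) h1
      simp only [mul_zero] at this
      linear_combination this + h2' - (A*a^2 + (A+1)*a + A + 1) * h2
    rcases mul_eq_zero.1 key with h | h
    · exact h
    · exact absurd (pow_eq_zero_iff (by norm_num) |>.1 h) ha0
  · intro hlam
    have hB : B + A = (A + 1) ^ 2 := by
      linear_combination hlam - (A^2+A+1) * h2
    by_cases hA : A + 1 = 0
    · refine ⟨1, ?_, ?_⟩
      · linear_combination hA + h2
      · linear_combination hB + (A+3) * hA
    · obtain ⟨a, ha⟩ := exists_quad_root (A + 1) 1 1 hA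
      refine ⟨a, by linear_combination ha, ?_⟩
      linear_combination hB * a^2 + (A + 1) * ha
end

section
/- Let K be an algebraically closed field of characteristic 2 and let A, B ∈ K satisfy λ := B + A² + A + 1 = 0. Then a tuple (x₀,x₁,x₂,x₃,x₄) ∈ K⁵ satisfies σ₁ = x₀, σ₃ = (A+1)x₀³ + σ₂x₀, σ₄ = (B+A)x₀⁴ + (A+1)σ₂x₀² if and only if there exist a ∈ K with (A+1)a² + a + 1 = 0 and a partition {i,j} ∪ {k,l} = {1,2,3,4} such that xᵢ = xⱼ, x₀ = a·x_k and x_l = (a+1)·x_k. In other words, the curve C defined by these equations is a union of (at most 12) projective lines, namely the S₄-orbit of the lines {(a t : s : s : t : (a+1)t) : (s:t) ∈ P¹}. -/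
open Polynomial

private lemma sing_cons {α : Type*} (a : α) : ({a} : Multiset α) = a ::ₘ 0 := rfl

private lemma ex1 {α : Type*} {y d : α} (h : (y ::ₘ 0 : Multiset α) = d ::ₘ 0) : y = d := by
  have : y ∈ (d ::ₘ 0 : Multiset α) := h ▸ by simp
  simpa using this

private lemma ex2 {α : Type*} {x y c d : α} (h : ({x, y} : Multiset α) = {c, d}) :
    (x = c ∧ y = d) ∨ (x = d ∧ y = c) := by
  have hc : c ∈ ({x, y} : Multiset α) := h ▸ by simp
  simp only [Multiset.insert_eq_cons, Multiset.mem_cons, Multiset.mem_singleton] at hc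
  simp only [Multiset.insert_eq_cons, sing_cons] at h
  rcases hc with hc | hc
  · subst hc; rw [Multiset.cons_inj_right] at h
    exact Or.inl ⟨rfl, ex1 h⟩
  · subst hc
    rw [Multiset.cons_swap, Multiset.cons_inj_right] at h
    exact Or.inr ⟨ex1 h, rfl⟩

private lemma ex3 {α : Type*} {x y z b c d : α} (h : ({x, y, z} : Multiset α) = {b, c, d}) :
    (x = b ∧ ({y, z} : Multiset α) = {c, d}) ∨
    (y = b ∧ ({x, z} : Multiset α) = {c, d}) ∨
    (z = b ∧ ({x, y} : Multiset α) = {c, d}) := by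
  have hb : b ∈ ({x, y, z} : Multiset α) := h ▸ by simp
  simp only [Multiset.insert_eq_cons, Multiset.mem_cons, Multiset.mem_singleton] at hb
  simp only [Multiset.insert_eq_cons, sing_cons] at h ⊢
  rcases hb with hb | hb | hb
  · subst hb; rw [Multiset.cons_inj_right] at h; exact Or.inl ⟨rfl, h⟩
  · subst hb; rw [Multiset.cons_swap, Multiset.cons_inj_right] at h
    exact Or.inr (Or.inl ⟨rfl, h⟩)
  · subst hb
    rw [show (x ::ₘ y ::ₘ b ::ₘ 0 : Multiset α) = b ::ₘ x ::ₘ y ::ₘ 0 by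
      rw [Multiset.cons_swap y b, Multiset.cons_swap x b], Multiset.cons_inj_right] at h
    exact Or.inr (Or.inr ⟨rfl, h⟩)

private lemma ex4 {α : Type*} {x y z w a b c d : α}
    (h : ({x, y, z, w} : Multiset α) = {a, b, c, d}) :
    (x = a ∧ ({y, z, w} : Multiset α) = {b, c, d}) ∨
    (y = a ∧ ({x, z, w} : Multiset α) = {b, c, d}) ∨
    (z = a ∧ ({x, y, w} : Multiset α) = {b, c, d}) ∨
    (w = a ∧ ({x, y, z} : Multiset α) = {b, c, d}) := by
  have ha : a ∈ ({x, y, z, w} : Multiset α) := h ▸ by simp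
  simp only [Multiset.insert_eq_cons, Multiset.mem_cons, Multiset.mem_singleton] at ha
  simp only [Multiset.insert_eq_cons, sing_cons] at h ⊢
  rcases ha with ha | ha | ha | ha
  · subst ha; rw [Multiset.cons_inj_right] at h; exact Or.inl ⟨rfl, h⟩
  · subst ha; rw [Multiset.cons_swap, Multiset.cons_inj_right] at h
    exact Or.inr (Or.inl ⟨rfl, h⟩)
  · subst ha
    rw [show (x ::ₘ y ::ₘ a ::ₘ w ::ₘ 0 : Multiset α) = a ::ₘ x ::ₘ y ::ₘ w ::ₘ 0 by
      rw [Multiset.cons_swap y a, Multiset.cons_swap x a], Multiset.cons_inj_right] at h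
    exact Or.inr (Or.inr (Or.inl ⟨rfl, h⟩))
  · subst ha
    rw [show (x ::ₘ y ::ₘ z ::ₘ a ::ₘ 0 : Multiset α) = a ::ₘ x ::ₘ y ::ₘ z ::ₘ 0 by
      rw [Multiset.cons_swap z a, Multiset.cons_swap y a, Multiset.cons_swap x a],
      Multiset.cons_inj_right] at h
    exact Or.inr (Or.inr (Or.inr ⟨rfl, h⟩))

private lemma expand4 {R : Type*} [CommRing R] (p q r w : R) :
    (X - C p) * (X - C q) * (X - C r) * (X - C w)
      = X^4 + C (-(p+q+r+w))*X^3 + C (p*q+p*r+p*w+q*r+q*w+r*w)*X^2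
        + C (-(p*q*r+p*q*w+p*r*w+q*r*w))*X + C (p*q*r*w) := by
  simp only [map_add, map_mul, map_neg]; ring

private lemma coeffs4 {R : Type*} [CommRing R] {a3 a2 a1 a0 b3 b2 b1 b0 : R}
    (h : X^4 + C a3*X^3 + C a2*X^2 + C a1*X + C a0
       = X^4 + C b3*X^3 + C b2*X^2 + C b1*X + C b0) :
    a3 = b3 ∧ a2 = b2 ∧ a1 = b1 ∧ a0 = b0 := by
  refine ⟨?_, ?_, ?_, ?_⟩
  · simpa using congrArg (Polynomial.coeff · 3) h
  · simpa using congrArg (Polynomial.coeff · 2) h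
  · simpa using congrArg (Polynomial.coeff · 1) h
  · simpa using congrArg (Polynomial.coeff · 0) h
private lemma perm_of_multiset {α : Type*} {x1 x2 x3 x4 a b c d : α}
    (h : ({x1, x2, x3, x4} : Multiset α) = {a, b, c, d}) :
    ∃ σ : Equiv.Perm (Fin 4), ![x1,x2,x3,x4] (σ 0) = a ∧ ![x1,x2,x3,x4] (σ 1) = b ∧
      ![x1,x2,x3,x4] (σ 2) = c ∧ ![x1,x2,x3,x4] (σ 3) = d := by
  rcases ex4 h with ⟨ha, h⟩ | ⟨ha, h⟩ | ⟨ha, h⟩ | ⟨ha, h⟩ <;>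
    [skip; skip; skip; skip] <;>
    rcases ex3 h with ⟨hb, h⟩ | ⟨hb, h⟩ | ⟨hb, h⟩ <;>
    rcases ex2 h with ⟨hc, hd⟩ | ⟨hd, hc⟩
  · exact ⟨⟨![0,1,2,3], ![0,1,2,3], by decide, by decide⟩, ha, hb, hc, hd⟩
  · exact ⟨⟨![0,1,3,2], ![0,1,3,2], by decide, by decide⟩, ha, hb, hc, hd⟩
  · exact ⟨⟨![0,2,1,3], ![0,2,1,3], by decide, by decide⟩, ha, hb, hc, hd⟩
  · exact ⟨⟨![0,2,3,1], ![0,3,1,2], by decide, by decide⟩, ha, hb, hc, hd⟩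
  · exact ⟨⟨![0,3,1,2], ![0,2,3,1], by decide, by decide⟩, ha, hb, hc, hd⟩
  · exact ⟨⟨![0,3,2,1], ![0,3,2,1], by decide, by decide⟩, ha, hb, hc, hd⟩
  · exact ⟨⟨![1,0,2,3], ![1,0,2,3], by decide, by decide⟩, ha, hb, hc, hd⟩
  · exact ⟨⟨![1,0,3,2], ![1,0,3,2], by decide, by decide⟩, ha, hb, hc, hd⟩
  · exact ⟨⟨![1,2,0,3], ![2,0,1,3], by decide, by decide⟩, ha, hb, hc, hd⟩
  · exact ⟨⟨![1,2,3,0], ![3,0,1,2], by decide, by decide⟩, ha, hb, hc, hd⟩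
  · exact ⟨⟨![1,3,0,2], ![2,0,3,1], by decide, by decide⟩, ha, hb, hc, hd⟩
  · exact ⟨⟨![1,3,2,0], ![3,0,2,1], by decide, by decide⟩, ha, hb, hc, hd⟩
  · exact ⟨⟨![2,0,1,3], ![1,2,0,3], by decide, by decide⟩, ha, hb, hc, hd⟩
  · exact ⟨⟨![2,0,3,1], ![1,3,0,2], by decide, by decide⟩, ha, hb, hc, hd⟩
  · exact ⟨⟨![2,1,0,3], ![2,1,0,3], by decide, by decide⟩, ha, hb, hc, hd⟩
  · exact ⟨⟨![2,1,3,0], ![3,1,0,2], by decide, by decide⟩, ha, hb, hc, hd⟩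
  · exact ⟨⟨![2,3,0,1], ![2,3,0,1], by decide, by decide⟩, ha, hb, hc, hd⟩
  · exact ⟨⟨![2,3,1,0], ![3,2,0,1], by decide, by decide⟩, ha, hb, hc, hd⟩
  · exact ⟨⟨![3,0,1,2], ![1,2,3,0], by decide, by decide⟩, ha, hb, hc, hd⟩
  · exact ⟨⟨![3,0,2,1], ![1,3,2,0], by decide, by decide⟩, ha, hb, hc, hd⟩
  · exact ⟨⟨![3,1,0,2], ![2,1,3,0], by decide, by decide⟩, ha, hb, hc, hd⟩
  · exact ⟨⟨![3,1,2,0], ![3,1,2,0], by decide, by decide⟩, ha, hb, hc, hd⟩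
  · exact ⟨⟨![3,2,0,1], ![2,3,1,0], by decide, by decide⟩, ha, hb, hc, hd⟩
  · exact ⟨⟨![3,2,1,0], ![3,2,1,0], by decide, by decide⟩, ha, hb, hc, hd⟩

/-- if `λ = B + A² + A + 1 = 0` over an algebraically closed
field of characteristic 2, then a tuple satisfies the equations of the curve
`C` iff there are `a` with `(A+1)a² + a + 1 = 0` and a partition
`{i,j} ∪ {k,l} = {1,2,3,4}` with `xᵢ = xⱼ`, `x₀ = a·x_k`, `x_l = (a+1)·x_k`;
i.e. `C` is the union of the `S₄`-orbit of the lines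
`{(a t : s : s : t : (a+1)t)}`. -/
theorem curve_is_union_of_lines
    (K : Type*) [Field K] [IsAlgClosed K] [CharP K 2] (A B : K)
    (hlam : B + A ^ 2 + A + 1 = 0) (x0 x1 x2 x3 x4 : K) :
    (x1 + x2 + x3 + x4 = x0 ∧
     x1 * x2 * x3 + x1 * x2 * x4 + x1 * x3 * x4 + x2 * x3 * x4 =
       (A + 1) * x0 ^ 3 +
         (x1 * x2 + x1 * x3 + x1 * x4 + x2 * x3 + x2 * x4 + x3 * x4) * x0 ∧
     x1 * x2 * x3 * x4 =
       (B + A) * x0 ^ 4 +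
         (A + 1) * (x1 * x2 + x1 * x3 + x1 * x4 + x2 * x3 + x2 * x4 + x3 * x4) *
           x0 ^ 2) ↔
    (∃ a : K, (A + 1) * a ^ 2 + a + 1 = 0 ∧
      ∃ σ : Equiv.Perm (Fin 4),
        ![x1, x2, x3, x4] (σ 0) = ![x1, x2, x3, x4] (σ 1) ∧
        x0 = a * ![x1, x2, x3, x4] (σ 2) ∧
        ![x1, x2, x3, x4] (σ 3) = (a + 1) * ![x1, x2, x3, x4] (σ 2)) := by
  have htwo : (2 : K) = 0 := by
    have := CharP.cast_eq_zero K 2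
    exact_mod_cast this
  constructor
  · rintro ⟨H1, H2, H3⟩
    obtain ⟨a, hq⟩ : ∃ a : K, (A + 1) * a ^ 2 + a + 1 = 0 := by
      by_cases hA : A + 1 = 0
      · exact ⟨1, by rw [hA]; linear_combination htwo⟩
      · obtain ⟨z, hz⟩ := IsAlgClosed.exists_root (C (A+1) * X^2 + X + C 1)
          (by
            have hdeg : (C (A+1) * X^2 + X + C 1 : K[X]).degree = 2 := by
              compute_degree!
            rw [hdeg]; decide)
        refine ⟨z, ?_⟩
        have := hz
        simp only [Polynomial.IsRoot, eval_add, eval_mul, eval_pow, eval_X, eval_C] at this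
        linear_combination this
    have ha0 : a ≠ 0 := by
      intro h; rw [h] at hq; simp at hq
    set t : K := a⁻¹ * x0 with ht
    have hx0 : x0 = a * t := by rw [ht]; field_simp
    obtain ⟨s, hs⟩ : ∃ s : K,
        s ^ 2 = (x1*x2 + x1*x3 + x1*x4 + x2*x3 + x2*x4 + x3*x4) + (A+1) * x0^2 :=
      IsAlgClosed.exists_pow_nat_eq _ (by norm_num : 0 < 2)
    have E1 : x1 + x2 + x3 + x4 = s + s + t + (a+1)*t := by
      linear_combination H1 + hx0 - (s+t)*htwo
    have E2 : x1*x2 + x1*x3 + x1*x4 + x2*x3 + x2*x4 + x3*x4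
        = s*s + s*t + s*((a+1)*t) + s*t + s*((a+1)*t) + t*((a+1)*t) := by
      linear_combination (-1 : K)*hs - (A+1)*(x0 + a*t)*hx0 - t^2*hq
        - (s*t + s*(a+1)*t)*htwo
    have E3 : x1*x2*x3 + x1*x2*x4 + x1*x3*x4 + x2*x3*x4
        = s*s*t + s*s*((a+1)*t) + s*t*((a+1)*t) + s*t*((a+1)*t) := by
      linear_combination H2 - x0*hs + s^2*hx0 - (s^2*t + s*(a+1)*t^2)*htwo
    have E4 : x1*x2*x3*x4 = s*s*t*((a+1)*t) := by
      linear_combination H3 + x0^4*hlam - (A+1)*x0^2*hs + (A+1)*s^2*(x0 + a*t)*hx0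
        + s^2*t^2*hq + (A*x0^4 - (A+1)^2*x0^4 - s^2*t^2*(a+1))*htwo
    have hpoly : (X - C x1) * (X - C x2) * (X - C x3) * (X - C x4)
        = (X - C s) * (X - C s) * (X - C t) * (X - C ((a+1)*t)) := by
      rw [expand4, expand4, E1, E2, E3, E4]
    have hL : ((({x1, x2, x3, x4} : Multiset K)).map fun r => X - C r).prod
        = (X - C x1) * (X - C x2) * (X - C x3) * (X - C x4) := by
      simp only [Multiset.insert_eq_cons, Multiset.map_cons, Multiset.prod_cons,
        Multiset.map_singleton, Multiset.prod_singleton]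
      ring
    have hR : ((({s, s, t, (a+1)*t} : Multiset K)).map fun r => X - C r).prod
        = (X - C s) * (X - C s) * (X - C t) * (X - C ((a+1)*t)) := by
      simp only [Multiset.insert_eq_cons, Multiset.map_cons, Multiset.prod_cons,
        Multiset.map_singleton, Multiset.prod_singleton]
      ring
    have hroots := congrArg Polynomial.roots (hL.trans (hpoly.trans hR.symm))
    rw [Polynomial.roots_multiset_prod_X_sub_C, Polynomial.roots_multiset_prod_X_sub_C]
      at hroots
    obtain ⟨σ, h1, h2, h3, h4⟩ := perm_of_multiset hroots
    refine ⟨a, hq, σ, by rw [h1, h2], by rw [h3]; exact hx0, by rw [h4, h3]⟩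
  · rintro ⟨a, hq, σ, h01, h02, h03⟩
    set f : Fin 4 → K := ![x1, x2, x3, x4] with hf
    set s : K := f (σ 0) with hsdef
    set u : K := f (σ 2) with hudef
    have hprod := Equiv.prod_comp σ (fun i => (X : K[X]) - C (f i))
    rw [Fin.prod_univ_four, Fin.prod_univ_four] at hprod
    rw [← h01, h03] at hprod
    have hfx : f 0 = x1 ∧ f 1 = x2 ∧ f 2 = x3 ∧ f 3 = x4 := by
      refine ⟨rfl, rfl, rfl, rfl⟩
    rw [hfx.1, hfx.2.1, hfx.2.2.1, hfx.2.2.2] at hprod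
    rw [show ((a+1) * u : K) = (a+1)*u from rfl] at hprod
    rw [expand4, expand4] at hprod
    obtain ⟨c3, c2, c1, c0⟩ := coeffs4 hprod
    refine ⟨?_, ?_, ?_⟩
    · linear_combination c3 - h02 + (s+u)*htwo
    · linear_combination c1 + x0*(c2 - (A+1)*(x0 + a*u)*h02 - u^2*hq
        - (s*u + s*(a+1)*u)*htwo) - s^2*h02 + (s^2*u + s*(a+1)*u^2)*htwo
    · linear_combination (-1 : K)*c0 - x0^4*hlam
        + (A+1)*x0^2*(c2 - (A+1)*(x0 + a*u)*h02 - u^2*hq - (s*u + s*(a+1)*u)*htwo)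
        - (A+1)*s^2*(x0 + a*u)*h02 - s^2*u^2*hq
        - (A*x0^4 - (A+1)^2*x0^4 - s^2*u^2*(a+1))*htwo
end

section
/- Let K be a field of characteristic 2 and let A, B ∈ K with λ := B + A² + A + 1 ≠ 0. Let (x₀,x₁,x₂,x₃,x₄) ∈ K⁵ be a nonzero tuple satisfying σ₁ = x₀, σ₃ = (A+1)x₀³ + σ₂x₀, σ₄ = (B+A)x₀⁴ + (A+1)σ₂x₀². If xᵢ = xⱼ for some partition {i,j} ∪ {k,l} = {1,2,3,4}, then x₀ = 0 and x_k = x_l. (Thus points of C whose last four coordinates are not pairwise distinct lie on one of the three lines x₀ = 0, xᵢ + xⱼ = 0, x_k + x_l = 0.) -/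
theorem key_lemma_ndpol
    (K : Type*) [Field K] [CharP K 2] (A B x0 : K)
    (hlam : B + A ^ 2 + A + 1 ≠ 0)
    (a b c d : K) (hab : a = b)
    (h1 : a + b + c + d = x0)
    (h3 : a * b * c + a * b * d + a * c * d + b * c * d =
      (A + 1) * x0 ^ 3 +
        (a * b + a * c + a * d + b * c + b * d + c * d) * x0)
    (h4 : a * b * c * d =
      (B + A) * x0 ^ 4 +
        (A + 1) * (a * b + a * c + a * d + b * c + b * d + c * d) * x0 ^ 2) :
    x0 = 0 ∧ c = d := by
  subst hab
  have twoeq : (2 : K) = 0 := by exact_mod_cast CharP.cast_eq_zero K 2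
  have e1 : c + d = x0 := by linear_combination h1 - a * twoeq
  have hx0 : x0 = 0 := by
    by_contra hx0
    have hx : x0 * ((A + 1) * x0 ^ 2 + c * d) = 0 := by
      linear_combination -h3 + a ^ 2 * e1 + a * (c * d - c * x0 - d * x0) * twoeq
    have hcd : (A + 1) * x0 ^ 2 + c * d = 0 := (mul_eq_zero.mp hx).resolve_left hx0
    have hfin : (B + A ^ 2 + A + 1) * x0 ^ 4 = 0 := by
      linear_combination -h4 + (a ^ 2 - (A + 1) * x0 ^ 2) * hcd +
        ((A ^ 2 + A + 1) * x0 ^ 4 - (A + 1) * (a ^ 2 + a * c + a * d) * x0 ^ 2) * twoeq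
    exact hlam ((mul_eq_zero.mp hfin).resolve_right (pow_ne_zero 4 hx0))
  refine ⟨hx0, ?_⟩
  have e2 : c + d = 0 := by rw [hx0] at e1; exact e1
  linear_combination e2 - d * twoeq

set_option maxHeartbeats 2000000 in
/-- for `λ = B + A² + A + 1 ≠ 0`, if a nonzero point of the curve
`C` has `xᵢ = xⱼ` for some partition `{i,j} ∪ {k,l} = {1,2,3,4}`, then
`x₀ = 0` and `x_k = x_l`; i.e. points of `C` whose last four coordinates are
not pairwise distinct lie on one of the three lines
`x₀ = xᵢ + xⱼ = x_k + x_l = 0`. -/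
theorem nondistinct_points_on_lines
    (K : Type*) [Field K] [CharP K 2] (A B : K)
    (hlam : B + A ^ 2 + A + 1 ≠ 0)
    (x0 x1 x2 x3 x4 : K)
    (hne : ¬(x0 = 0 ∧ x1 = 0 ∧ x2 = 0 ∧ x3 = 0 ∧ x4 = 0))
    (h1 : x1 + x2 + x3 + x4 = x0)
    (h3 : x1 * x2 * x3 + x1 * x2 * x4 + x1 * x3 * x4 + x2 * x3 * x4 =
      (A + 1) * x0 ^ 3 +
        (x1 * x2 + x1 * x3 + x1 * x4 + x2 * x3 + x2 * x4 + x3 * x4) * x0)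
    (h4 : x1 * x2 * x3 * x4 =
      (B + A) * x0 ^ 4 +
        (A + 1) * (x1 * x2 + x1 * x3 + x1 * x4 + x2 * x3 + x2 * x4 + x3 * x4) *
          x0 ^ 2) :
    ∀ σ : Equiv.Perm (Fin 4),
      ![x1, x2, x3, x4] (σ 0) = ![x1, x2, x3, x4] (σ 1) →
      x0 = 0 ∧ ![x1, x2, x3, x4] (σ 2) = ![x1, x2, x3, x4] (σ 3) := by
  intro σ hσ
  have d01 : σ 0 ≠ σ 1 := σ.injective.ne (by decide)
  have d02 : σ 0 ≠ σ 2 := σ.injective.ne (by decide)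
  have d03 : σ 0 ≠ σ 3 := σ.injective.ne (by decide)
  have d12 : σ 1 ≠ σ 2 := σ.injective.ne (by decide)
  have d13 : σ 1 ≠ σ 3 := σ.injective.ne (by decide)
  have d23 : σ 2 ≠ σ 3 := σ.injective.ne (by decide)
  revert d01 d02 d03 d12 d13 d23 hσ
  generalize σ 0 = i
  generalize σ 1 = j
  generalize σ 2 = k
  generalize σ 3 = l
  intro hσ d01 d02 d03 d12 d13 d23
  fin_cases i <;> fin_cases j <;> fin_cases k <;> fin_cases l <;>
    first
      | exact absurd rfl d01 | exact absurd rfl d02 | exact absurd rfl d03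
      | exact absurd rfl d12 | exact absurd rfl d13 | exact absurd rfl d23
      | (simp at hσ ⊢ <;>
        exact key_lemma_ndpol K A B x0 hlam _ _ _ _ hσ
          (by linear_combination h1) (by linear_combination h3) (by linear_combination h4))
end

section
/- Let K be a field of characteristic 2, A, B ∈ K, λ := B + A² + A + 1, and let x₁,x₂,x₃,x₄ ∈ K satisfy x₁+x₂+x₃+x₄ = 1, x₁³+x₂³+x₃³+x₄³ = A, x₁⁵+x₂⁵+x₃⁵+x₄⁵ = B. Assume x₁+x₂ ∉ {0,1}, and set u = (x₃+x₄)/(x₁+x₂) and η = x₁x₂/(x₃+x₄). Then η² + η = λu + λ/u + (A+1)/u + (A+1)²/u² + (A+1)². -/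
/-!
Put `s = x₁ + x₂`, `p = x₁x₂`, `t = x₃ + x₄`, `q = x₃x₄`, so `s + t = 1`, `η = p / t`,
`u = t / s`. In characteristic 2 the power sums of a pair are `x³ + y³ = s³ + sp` and
`x⁵ + y⁵ = s⁵ + s³p + sp²`, and with `s + t = 1` the system becomes `A + 1 = st + sp + tq`
and `λ = B + A² + A + 1 = st (p² + tp + q² + sq)`. Substituting these, the claimed equation is
a polynomial identity in `s, p, q` modulo 2 once denominators are cleared.
-/

namespace CharTwo

variable {R : Type*} [CommRing R] [CharP R 2]

theorem pow_three_add_pow_three (x y : R) :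
    x ^ 3 + y ^ 3 = (x + y) ^ 3 + (x + y) * (x * y) := by
  ring_nf; reduce_mod_char!

theorem pow_five_add_pow_five (x y : R) :
    x ^ 5 + y ^ 5 = (x + y) ^ 5 + (x + y) ^ 3 * (x * y) + (x + y) * (x * y) ^ 2 := by
  ring_nf; reduce_mod_char!

theorem eq_add_one_of_add_eq_one {s t : R} (hst : s + t = 1) : t = s + 1 := by
  linear_combination hst - s * two_eq_zero (R := R)

end CharTwo

open CharTwo

section

variable {R : Type*} [CommRing R] [CharP R 2] {s t : R}

theorem cube_sum_add_one_of_add_eq_one (hst : s + t = 1) (p q : R) :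
    s ^ 3 + s * p + t ^ 3 + t * q + 1 = s * t + s * p + t * q := by
  obtain rfl := eq_add_one_of_add_eq_one hst
  ring_nf; reduce_mod_char!

theorem lambda_eq_of_add_eq_one (hst : s + t = 1) (p q : R) :
    s ^ 5 + s ^ 3 * p + s * p ^ 2 + t ^ 5 + t ^ 3 * q + t * q ^ 2
        + (s ^ 3 + s * p + t ^ 3 + t * q) ^ 2 + (s ^ 3 + s * p + t ^ 3 + t * q) + 1
      = s * t * (p ^ 2 + t * p + q ^ 2 + s * q) := by
  obtain rfl := eq_add_one_of_add_eq_one hst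
  ring_nf; reduce_mod_char!

end

theorem eta_equation_of_pair_invariants {K : Type*} [Field K] [CharP K 2] {s t : K}
    (hst : s + t = 1) (hs : s ≠ 0) (ht : t ≠ 0) {p q a l : K} (ha : a = s * t + s * p + t * q)
    (hl : l = s * t * (p ^ 2 + t * p + q ^ 2 + s * q)) :
    (p / t) ^ 2 + p / t =
      l * (t / s) + l / (t / s) + a / (t / s) + a ^ 2 / (t / s) ^ 2 + a ^ 2 := by
  obtain rfl := eq_add_one_of_add_eq_one hst
  subst ha hl
  field_simp
  ring_nf; reduce_mod_char!

/-- with `λ = B + A² + A + 1`, `u = (x₃+x₄)/(x₁+x₂)` and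
`η = x₁x₂/(x₃+x₄)`, a solution of the affine system of `C` with
`x₁+x₂ ∉ {0,1}` satisfies
`η² + η = λu + λ/u + (A+1)/u + (A+1)²/u² + (A+1)²`. -/
theorem eta_equation
    (K : Type*) [Field K] [CharP K 2] (A B : K)
    (x1 x2 x3 x4 : K)
    (h1 : x1 + x2 + x3 + x4 = 1)
    (h3 : x1 ^ 3 + x2 ^ 3 + x3 ^ 3 + x4 ^ 3 = A)
    (h5 : x1 ^ 5 + x2 ^ 5 + x3 ^ 5 + x4 ^ 5 = B)
    (h0 : x1 + x2 ≠ 0) (hone : x1 + x2 ≠ 1)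
    (u η : K)
    (hu : u = (x3 + x4) / (x1 + x2))
    (hη : η = x1 * x2 / (x3 + x4)) :
    η ^ 2 + η =
      (B + A ^ 2 + A + 1) * u + (B + A ^ 2 + A + 1) / u +
        (A + 1) / u + (A + 1) ^ 2 / u ^ 2 + (A + 1) ^ 2 := by
  have hst : (x1 + x2) + (x3 + x4) = 1 := by rw [← h1]; ring
  have ht : x3 + x4 ≠ 0 := fun h ↦ hone (by simpa [h] using hst)
  have hA : A = (x1 + x2) ^ 3 + (x1 + x2) * (x1 * x2) + (x3 + x4) ^ 3 + (x3 + x4) * (x3 * x4) := by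
    rw [← h3, add_assoc _ (x3 ^ 3), pow_three_add_pow_three, pow_three_add_pow_three]; ring
  have hB : B = (x1 + x2) ^ 5 + (x1 + x2) ^ 3 * (x1 * x2) + (x1 + x2) * (x1 * x2) ^ 2
      + (x3 + x4) ^ 5 + (x3 + x4) ^ 3 * (x3 * x4) + (x3 + x4) * (x3 * x4) ^ 2 := by
    rw [← h5, add_assoc _ (x3 ^ 5), pow_five_add_pow_five, pow_five_add_pow_five]; ring
  subst hu hη
  refine eta_equation_of_pair_invariants (q := x3 * x4) hst h0 ht ?_ ?_
  · rw [hA]; exact cube_sum_add_one_of_add_eq_one hst _ _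
  · rw [hB, hA]; exact lambda_eq_of_add_eq_one hst _ _
end

section
/- Let q = 2^m with m odd, and let λ, c ∈ F_q. Then #{x ∈ F_q∖{0} : Tr(λ(x³ + x⁻³) + c) = 0} = #{x ∈ F_q∖{0} : Tr(λ(x + x⁻¹) + c) = 0}. -/
lemma coprime_card_units_three (m : ℕ) (hm : Odd m) :
    (Nat.card (GaloisField 2 m)ˣ).Coprime 3 := by
  haveI : Fact (Nat.Prime 2) := ⟨by norm_num⟩
  have hm0 : m ≠ 0 := by rintro rfl; simp at hm
  have hu : Nat.card (GaloisField 2 m)ˣ = 2 ^ m - 1 := by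
    rw [Nat.card_units, GaloisField.card 2 m hm0]
  rw [hu, Nat.coprime_comm]
  have h3 : Nat.Prime 3 := by norm_num
  rw [Nat.Prime.coprime_iff_not_dvd h3]
  intro hdvd
  have h1 : (1 : ℕ) ≤ 2 ^ m := Nat.one_le_two_pow
  have : ((2 ^ m - 1 : ℕ) : ZMod 3) = 0 := by
    exact_mod_cast (ZMod.natCast_eq_zero_iff _ 3).2 hdvd
  rw [Nat.cast_sub h1] at this
  have h2 : ((2 : ℕ) : ZMod 3) = -1 := by decide
  rw [Nat.cast_pow, h2, hm.neg_one_pow] at this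
  simp at this
  exact absurd this (by decide)

lemma cube_bijective (m : ℕ) (hm : Odd m) :
    Function.Bijective (fun x : GaloisField 2 m => x ^ 3) := by
  rw [← Finite.injective_iff_bijective]
  intro x y h
  simp only at h
  rcases eq_or_ne y 0 with rfl | hy
  · simpa [pow_eq_zero_iff] using h
  rcases eq_or_ne x 0 with rfl | hx
  · exact absurd (by simpa [pow_eq_zero_iff] using h.symm) hy
  have hc := coprime_card_units_three m hm
  have := (powCoprime hc).injective (a₁ := Units.mk0 x hx) (a₂ := Units.mk0 y hy)
    (by ext; simpa [powCoprime] using h)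
  simpa using congrArg Units.val this

/-- for `q = 2^m` with `m` odd and `λ, c ∈ F_q`, the number of
nonzero `x` with `Tr(λ(x³ + x⁻³) + c) = 0` equals the number of nonzero `x`
with `Tr(λ(x + x⁻¹) + c) = 0`. -/
theorem trace_count_cube_eq
    (m : ℕ) (hm : Odd m) (lam c : GaloisField 2 m) :
    Set.ncard {x : GaloisField 2 m | x ≠ 0 ∧
      Algebra.trace (ZMod 2) (GaloisField 2 m)
        (lam * (x ^ 3 + (x ^ 3)⁻¹) + c) = 0} =
    Set.ncard {x : GaloisField 2 m | x ≠ 0 ∧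
      Algebra.trace (ZMod 2) (GaloisField 2 m)
        (lam * (x + x⁻¹) + c) = 0} := by
  have hbij := cube_bijective m hm
  have himg : (fun x : GaloisField 2 m => x ^ 3) ''
      {x : GaloisField 2 m | x ≠ 0 ∧
        Algebra.trace (ZMod 2) (GaloisField 2 m)
          (lam * (x ^ 3 + (x ^ 3)⁻¹) + c) = 0} =
      {x : GaloisField 2 m | x ≠ 0 ∧
        Algebra.trace (ZMod 2) (GaloisField 2 m)
          (lam * (x + x⁻¹) + c) = 0} := by
    ext y
    constructor
    · rintro ⟨x, ⟨hx0, hxt⟩, rfl⟩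
      exact ⟨pow_ne_zero 3 hx0, hxt⟩
    · rintro ⟨hy0, hyt⟩
      obtain ⟨x, rfl⟩ := hbij.2 y
      refine ⟨x, ⟨?_, hyt⟩, rfl⟩
      rintro rfl
      simp at hy0
  rw [← himg, Set.ncard_image_of_injective _ hbij.1]
end

section
/- Let K be a field of characteristic 2, let A, B ∈ K and c ∈ K. Then the map (x₁,x₂,x₃,x₄) ↦ (x₁+c, x₂+c, x₃+c, x₄+c) is a bijection from the set of solutions in K⁴ of the system x₁+x₂+x₃+x₄ = 1, Σxᵢ³ = A, Σxᵢ⁵ = B onto the set of solutions of the system with (A,B) replaced by (A + c + c², B + c + c⁴); it preserves the property that the coordinates are pairwise distinct, and the quantity λ = B + A² + A + 1 is unchanged: (B + c + c⁴) + (A + c + c²)² + (A + c + c²) + 1 = B + A² + A + 1. In particular, over K = F_q one has N(A,B) = N(A + c + c², B + c + c⁴). -/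
section Helpers
variable {K : Type*} [Field K]

private lemma shift_sols (h2 : (2:K) = 0) (x1 x2 x3 x4 A B c : K)
    (h1 : x1 + x2 + x3 + x4 = 1)
    (h3 : x1^3 + x2^3 + x3^3 + x4^3 = A)
    (h5 : x1^5 + x2^5 + x3^5 + x4^5 = B) :
    (x1+c) + (x2+c) + (x3+c) + (x4+c) = 1 ∧
    (x1+c)^3 + (x2+c)^3 + (x3+c)^3 + (x4+c)^3 = A + c + c^2 ∧
    (x1+c)^5 + (x2+c)^5 + (x3+c)^5 + (x4+c)^5 = B + c + c^4 := by
  have hsq : x1^2 + x2^2 + x3^2 + x4^2 = 1 := by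
    linear_combination (x1+x2+x3+x4+1)*h1 - (x1*x2+x1*x3+x1*x4+x2*x3+x2*x4+x3*x4)*h2
  have hq4 : x1^4 + x2^4 + x3^4 + x4^4 = 1 := by
    linear_combination (x1^2+x2^2+x3^2+x4^2+1)*hsq
      - (x1^2*x2^2+x1^2*x3^2+x1^2*x4^2+x2^2*x3^2+x2^2*x4^2+x3^2*x4^2)*h2
  refine ⟨by linear_combination h1 + (2*c)*h2, ?_, ?_⟩
  · linear_combination h3 + c*hsq + c^2*h1 +
      (c*(x1^2+x2^2+x3^2+x4^2) + c^2*(x1+x2+x3+x4) + 2*c^3)*h2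
  · linear_combination h5 + c*hq4 + c^4*h1 +
      (2*c*(x1^4+x2^4+x3^4+x4^4) + 5*c^2*(x1^3+x2^3+x3^3+x4^3)
        + 5*c^3*(x1^2+x2^2+x3^2+x4^2) + 2*c^4*(x1+x2+x3+x4) + 2*c^5)*h2

private lemma shift_finset [CharP K 2] [DecidableEq K] (s : Finset K) (A B c : K)
    (hc : s.card = 4) (h1 : (∑ x ∈ s, x) = 1)
    (h3 : (∑ x ∈ s, x^3) = A) (h5 : (∑ x ∈ s, x^5) = B) :
    (s.image (· + c)).card = 4 ∧
    (∑ x ∈ s.image (· + c), x) = 1 ∧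
    (∑ x ∈ s.image (· + c), x^3) = A + c + c^2 ∧
    (∑ x ∈ s.image (· + c), x^5) = B + c + c^4 := by
  have h2 : (2:K) = 0 := by exact_mod_cast CharP.cast_eq_zero K 2
  have hinj : Function.Injective (· + c) := add_left_injective c
  have hsum : ∀ (f : K → K), (∑ x ∈ s.image (· + c), f x) = ∑ x ∈ s, f (x + c) :=
    fun f => Finset.sum_image (fun x _ y _ h => hinj h)
  have hsq : (∑ x ∈ s, x^2) = 1 := by
    simpa [frobenius_def, h1] using (map_sum (frobenius K 2) id s).symm
  have hq4 : (∑ x ∈ s, x^4) = 1 := by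
    have := (map_sum (frobenius K 2) (fun x => x^2) s).symm
    simp only [frobenius_def, ← pow_mul] at this
    simpa [hsq] using this
  refine ⟨by rw [Finset.card_image_of_injective s hinj, hc], ?_, ?_, ?_⟩
  · rw [hsum (fun x => x), Finset.sum_add_distrib, h1, Finset.sum_const, hc,
      nsmul_eq_mul]
    push_cast
    linear_combination 2*c*h2
  · rw [hsum (fun x => x^3)]
    have hpt : ∀ x ∈ s, (x+c)^3 = x^3 + c*x^2 + c^2*x + c^3 :=
      fun x _ => by linear_combination (c*x^2+c^2*x)*h2
    rw [Finset.sum_congr rfl hpt, Finset.sum_add_distrib, Finset.sum_add_distrib,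
      Finset.sum_add_distrib, ← Finset.mul_sum, ← Finset.mul_sum, Finset.sum_const,
      h1, h3, hsq, hc, nsmul_eq_mul]
    push_cast
    linear_combination 2*c^3*h2
  · rw [hsum (fun x => x^5)]
    have hpt : ∀ x ∈ s, (x+c)^5 = x^5 + c*x^4 + c^4*x + c^5 :=
      fun x _ => by linear_combination (2*c*x^4+5*c^2*x^3+5*c^3*x^2+2*c^4*x)*h2
    rw [Finset.sum_congr rfl hpt, Finset.sum_add_distrib, Finset.sum_add_distrib,
      Finset.sum_add_distrib, ← Finset.mul_sum, ← Finset.mul_sum, Finset.sum_const,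
      h1, h5, hq4, hc, nsmul_eq_mul]
    push_cast
    linear_combination 2*c^5*h2

end Helpers

/-- translation by `(c,c,c,c)` is a bijection from the solutions
of the system with parameters `(A,B)` onto those with parameters
`(A + c + c², B + c + c⁴)`; it preserves pairwise distinctness of the
coordinates; the invariant `λ = B + A² + A + 1` is unchanged; and in
particular `N(A,B) = N(A + c + c², B + c + c⁴)`. -/
theorem translation_bijection
    (K : Type*) [Field K] [CharP K 2] (A B c : K) :
    Set.BijOn
      (fun v : K × K × K × K =>
        (v.1 + c, v.2.1 + c, v.2.2.1 + c, v.2.2.2 + c))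
      {v : K × K × K × K |
        v.1 + v.2.1 + v.2.2.1 + v.2.2.2 = 1 ∧
        v.1 ^ 3 + v.2.1 ^ 3 + v.2.2.1 ^ 3 + v.2.2.2 ^ 3 = A ∧
        v.1 ^ 5 + v.2.1 ^ 5 + v.2.2.1 ^ 5 + v.2.2.2 ^ 5 = B}
      {v : K × K × K × K |
        v.1 + v.2.1 + v.2.2.1 + v.2.2.2 = 1 ∧
        v.1 ^ 3 + v.2.1 ^ 3 + v.2.2.1 ^ 3 + v.2.2.2 ^ 3 = A + c + c ^ 2 ∧
        v.1 ^ 5 + v.2.1 ^ 5 + v.2.2.1 ^ 5 + v.2.2.2 ^ 5 = B + c + c ^ 4} ∧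
    (∀ v : K × K × K × K,
      [v.1, v.2.1, v.2.2.1, v.2.2.2].Pairwise (· ≠ ·) ↔
      [v.1 + c, v.2.1 + c, v.2.2.1 + c, v.2.2.2 + c].Pairwise (· ≠ ·)) ∧
    (B + c + c ^ 4) + (A + c + c ^ 2) ^ 2 + (A + c + c ^ 2) + 1 =
      B + A ^ 2 + A + 1 ∧
    Set.ncard {s : Finset K | s.card = 4 ∧ (∑ x ∈ s, x) = 1 ∧
        (∑ x ∈ s, x ^ 3) = A ∧ (∑ x ∈ s, x ^ 5) = B} =
    Set.ncard {s : Finset K | s.card = 4 ∧ (∑ x ∈ s, x) = 1 ∧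
        (∑ x ∈ s, x ^ 3) = A + c + c ^ 2 ∧
        (∑ x ∈ s, x ^ 5) = B + c + c ^ 4} := by
  classical
  have h2 : (2:K) = 0 := by exact_mod_cast CharP.cast_eq_zero K 2
  have hcc : ∀ x : K, x + c + c = x := fun x => by linear_combination c*h2
  refine ⟨⟨?_, ?_, ?_⟩, ?_, ?_, ?_⟩
  · -- MapsTo
    rintro ⟨a, b, d, e⟩ ⟨h1, h3, h5⟩
    exact shift_sols h2 a b d e A B c h1 h3 h5
  · -- InjOn
    rintro ⟨a, b, d, e⟩ _ ⟨a', b', d', e'⟩ _ h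
    simp only [Prod.mk.injEq] at h
    obtain ⟨u1, u2, u3, u4⟩ := h
    simp only [Prod.mk.injEq]
    exact ⟨add_right_cancel u1, add_right_cancel u2, add_right_cancel u3,
      add_right_cancel u4⟩
  · -- SurjOn
    rintro ⟨a, b, d, e⟩ ⟨h1, h3, h5⟩
    refine ⟨(a + c, b + c, d + c, e + c), ?_, ?_⟩
    · obtain ⟨g1, g3, g5⟩ := shift_sols h2 a b d e (A + c + c^2) (B + c + c^4) c h1 h3 h5
      exact ⟨g1, by linear_combination g3 + (c + c^2)*h2,
        by linear_combination g5 + (c + c^4)*h2⟩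
    · simp only [Prod.mk.injEq]
      exact ⟨hcc a, hcc b, hcc d, hcc e⟩
  · -- pairwise distinct
    intro v
    simp [List.pairwise_cons]
  · -- invariant
    linear_combination (c + c^2 + c^4 + A*c + A*c^2 + c^3)*h2
  · -- ncard
    have Finj : Function.Injective (fun t : Finset K => t.image (· + c)) :=
      Finset.image_injective (add_left_injective c)
    have hcomp : ((· + c) ∘ (· + c) : K → K) = id := funext fun x => hcc x
    have hFF : ∀ t : Finset K, (t.image (· + c)).image (· + c) = t := fun t => by
      rw [Finset.image_image, hcomp, Finset.image_id]
    have himg : (fun t : Finset K => t.image (· + c)) ''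
        {s : Finset K | s.card = 4 ∧ (∑ x ∈ s, x) = 1 ∧
          (∑ x ∈ s, x ^ 3) = A ∧ (∑ x ∈ s, x ^ 5) = B} =
        {s : Finset K | s.card = 4 ∧ (∑ x ∈ s, x) = 1 ∧
          (∑ x ∈ s, x ^ 3) = A + c + c ^ 2 ∧ (∑ x ∈ s, x ^ 5) = B + c + c ^ 4} := by
      ext t
      constructor
      · rintro ⟨s, ⟨hc', h1, h3, h5⟩, rfl⟩
        exact shift_finset s A B c hc' h1 h3 h5
      · rintro ⟨hc', h1, h3, h5⟩
        refine ⟨t.image (· + c), ?_, hFF t⟩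
        obtain ⟨g0, g1, g3, g5⟩ :=
          shift_finset t (A + c + c^2) (B + c + c^4) c hc' h1 h3 h5
        exact ⟨g0, g1, by linear_combination g3 + (c + c^2)*h2,
          by linear_combination g5 + (c + c^4)*h2⟩
    rw [← himg, Set.ncard_image_of_injective _ Finj]
end

section
/- Let q = 2^m and A, B ∈ F_q. Then N(A,B) is even, where N(A,B) denotes the number of 4-element subsets {x₁,x₂,x₃,x₄} of F_q with x₁+x₂+x₃+x₄ = 1, x₁³+x₂³+x₃³+x₄³ = A and x₁⁵+x₂⁵+x₃⁵+x₄⁵ = B. -/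
lemma even_card_of_invol {α : Type*} [DecidableEq α] (f : α → α)
    (T : Finset α) (hmem : ∀ a ∈ T, f a ∈ T) (hinv : ∀ a ∈ T, f (f a) = a)
    (hne : ∀ a ∈ T, f a ≠ a) : Even T.card := by
  induction T using Finset.strongInduction with
  | _ T ih =>
    rcases T.eq_empty_or_nonempty with rfl | ⟨a, ha⟩
    · simp
    · have hfa := hmem a ha
      have hpair : ({a, f a} : Finset α) ⊆ T := by
        intro x hx
        rcases Finset.mem_insert.mp hx with rfl | hx
        · exact ha
        · exact Finset.mem_singleton.mp hx ▸ hfa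
      have hpc : ({a, f a} : Finset α).card = 2 := by
        rw [Finset.card_insert_of_notMem (by simpa using (hne a ha).symm)]
        simp
      have h2T : 2 ≤ T.card := hpc ▸ Finset.card_le_card hpair
      have hss : T \ {a, f a} ⊂ T := by
        apply Finset.sdiff_ssubset hpair
        simp
      have hcard : T.card = (T \ {a, f a}).card + 2 := by
        rw [Finset.card_sdiff_of_subset hpair, hpc]
        omega
      have hmem' : ∀ x ∈ T \ {a, f a}, f x ∈ T \ {a, f a} := by
        intro x hx
        obtain ⟨hxT, hxn⟩ := Finset.mem_sdiff.mp hx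
        simp only [Finset.mem_insert, Finset.mem_singleton, not_or] at hxn
        refine Finset.mem_sdiff.mpr ⟨hmem x hxT, ?_⟩
        simp only [Finset.mem_insert, Finset.mem_singleton, not_or]
        constructor
        · intro h
          exact hxn.2 (by rw [← hinv x hxT, h])
        · intro h
          exact hxn.1 (by rw [← hinv x hxT, h, hinv a ha])
      have hev := ih _ hss hmem'
        (fun x hx => hinv x (Finset.mem_sdiff.mp hx).1)
        (fun x hx => hne x (Finset.mem_sdiff.mp hx).1)
      rw [hcard]
      exact hev.add even_two

/-- for `q = 2^m` and `A, B ∈ F_q`, the number `N(A,B)` of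
4-element subsets `{x₁,x₂,x₃,x₄}` of `F_q` with `Σxᵢ = 1`, `Σxᵢ³ = A`,
`Σxᵢ⁵ = B` is even. -/
theorem N_even (m : ℕ) (A B : GaloisField 2 m) :
    Even (Set.ncard {s : Finset (GaloisField 2 m) | s.card = 4 ∧
      (∑ x ∈ s, x) = 1 ∧ (∑ x ∈ s, x ^ 3) = A ∧ (∑ x ∈ s, x ^ 5) = B}) := by
  classical
  haveI : Fintype (GaloisField 2 m) := Fintype.ofFinite _
  have h2 : (2 : GaloisField 2 m) = 0 := by
    have := CharP.cast_eq_zero (GaloisField 2 m) 2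
    exact_mod_cast this
  have hflip : ∀ x : GaloisField 2 m, x + 1 + 1 = x := fun x => by linear_combination h2
  have ginj : ∀ x y : GaloisField 2 m, x + 1 = y + 1 → x = y := fun x y h => by
    linear_combination h
  rw [Set.ncard_eq_toFinset_card _ (Set.toFinite _)]
  apply even_card_of_invol (fun s => s.image (· + 1))
  · -- maps the set to itself
    intro s hs
    rw [Set.Finite.mem_toFinset] at hs ⊢
    obtain ⟨hc, h1, h3, h5⟩ := hs
    have himg : ∀ F : GaloisField 2 m → GaloisField 2 m, (∑ x ∈ s.image (· + 1), F x) = ∑ x ∈ s, F (x + 1) :=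
      fun F => Finset.sum_image (fun x _ y _ h => ginj x y h)
    have hcard' : (s.image (· + 1)).card = 4 := by
      rw [Finset.card_image_of_injective _ (fun x y h => ginj x y h), hc]
    have hconst : (∑ _x ∈ s, (1 : GaloisField 2 m)) = 0 := by
      rw [Finset.sum_const, hc]
      push_cast
      linear_combination 2 * h2
    have hsq : (∑ x ∈ s, x ^ 2) = 1 := by
      rw [← CharTwo.sum_sq, h1, one_pow]
    have hpow4 : (∑ x ∈ s, x ^ 4) = 1 := by
      have : (∑ x ∈ s, x ^ 4) = ∑ x ∈ s, (x ^ 2) ^ 2 := by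
        apply Finset.sum_congr rfl
        intro x _
        ring
      rw [this, ← CharTwo.sum_sq, hsq, one_pow]
    refine ⟨hcard', ?_, ?_, ?_⟩
    · rw [himg]
      have : (∑ x ∈ s, (x + 1)) = (∑ x ∈ s, x) + ∑ _x ∈ s, (1 : GaloisField 2 m) :=
        Finset.sum_add_distrib
      rw [this, h1, hconst, add_zero]
    · rw [himg]
      have step : (∑ x ∈ s, (x + 1) ^ 3)
          = ∑ x ∈ s, (x ^ 3 + (x ^ 2 + (x + 1))) := by
        apply Finset.sum_congr rfl
        intro x _
        linear_combination (x ^ 2 + x) * h2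
      rw [step, Finset.sum_add_distrib, Finset.sum_add_distrib, Finset.sum_add_distrib,
        h3, hsq, h1, hconst]
      linear_combination h2
    · rw [himg]
      have step : (∑ x ∈ s, (x + 1) ^ 5)
          = ∑ x ∈ s, (x ^ 5 + (x ^ 4 + (x + 1))) := by
        apply Finset.sum_congr rfl
        intro x _
        linear_combination (2 * x ^ 4 + 5 * x ^ 3 + 5 * x ^ 2 + 2 * x) * h2
      rw [step, Finset.sum_add_distrib, Finset.sum_add_distrib, Finset.sum_add_distrib,
        h5, hpow4, h1, hconst]
      linear_combination h2
  · -- involution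
    intro s _
    rw [Finset.image_image]
    have : ((· + 1) ∘ (· + 1) : GaloisField 2 m → GaloisField 2 m) = id := funext fun x => hflip x
    rw [this, Finset.image_id]
  · -- no fixed points
    intro s hs hfix
    rw [Set.Finite.mem_toFinset] at hs
    obtain ⟨hc, h1, -, -⟩ := hs
    have hmemadd : ∀ x ∈ s, x + 1 ∈ s := by
      intro x hx
      rw [← hfix]
      exact Finset.mem_image_of_mem _ hx
    have hne1 : ∀ x : GaloisField 2 m, x + 1 ≠ x := by
      intro x h
      have : (1 : GaloisField 2 m) = 0 := by linear_combination h
      exact one_ne_zero this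
    obtain ⟨a, ha⟩ : s.Nonempty := Finset.card_pos.mp (by omega)
    have ha1 : a + 1 ∈ s := hmemadd a ha
    have hts : ({a, a + 1} : Finset (GaloisField 2 m)) ⊆ s := by
      simp [Finset.insert_subset_iff, ha, ha1]
    have htc : ({a, a + 1} : Finset (GaloisField 2 m)).card = 2 := by
      rw [Finset.card_insert_of_notMem (by simpa using (hne1 a).symm)]
      simp
    have htcd : (s \ {a, a + 1}).card = 2 := by
      rw [Finset.card_sdiff_of_subset hts, htc, hc]
    obtain ⟨b, hb⟩ : (s \ {a, a + 1}).Nonempty := Finset.card_pos.mp (by omega)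
    obtain ⟨hbs, hbn⟩ := Finset.mem_sdiff.mp hb
    simp only [Finset.mem_insert, Finset.mem_singleton, not_or] at hbn
    obtain ⟨hba, hba1⟩ := hbn
    have hb1 : b + 1 ∈ s := hmemadd b hbs
    have hb1a : b + 1 ≠ a := by
      intro h
      exact hba1 (ginj b (a + 1) (by rw [h, hflip]))
    have hb1a1 : b + 1 ≠ a + 1 := fun h => hba (ginj b a h)
    -- s = {a, a+1, b, b+1}
    have m1 : (b : GaloisField 2 m) ∉ ({b + 1} : Finset (GaloisField 2 m)) := by
      simp only [Finset.mem_singleton]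
      exact (hne1 b).symm
    have m2 : (a + 1 : GaloisField 2 m) ∉ ({b, b + 1} : Finset (GaloisField 2 m)) := by
      simp only [Finset.mem_insert, Finset.mem_singleton, not_or]
      exact ⟨Ne.symm hba1, Ne.symm hb1a1⟩
    have m3 : (a : GaloisField 2 m) ∉ ({a + 1, b, b + 1} : Finset (GaloisField 2 m)) := by
      simp only [Finset.mem_insert, Finset.mem_singleton, not_or]
      exact ⟨(hne1 a).symm, Ne.symm hba, Ne.symm hb1a⟩
    have hsub : ({a, a + 1, b, b + 1} : Finset (GaloisField 2 m)) ⊆ s := by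
      simp [Finset.insert_subset_iff, ha, ha1, hbs, hb1]
    have h4 : ({a, a + 1, b, b + 1} : Finset (GaloisField 2 m)).card = 4 := by
      rw [Finset.card_insert_of_notMem m3, Finset.card_insert_of_notMem m2,
        Finset.card_insert_of_notMem m1, Finset.card_singleton]
    have hseq : ({a, a + 1, b, b + 1} : Finset (GaloisField 2 m)) = s :=
      Finset.eq_of_subset_of_card_le hsub (by rw [h4, hc])
    rw [← hseq] at h1
    rw [Finset.sum_insert m3, Finset.sum_insert m2, Finset.sum_insert m1,
      Finset.sum_singleton] at h1
    exact one_ne_zero (α := GaloisField 2 m) (by linear_combination -h1 + (a + b + 1) * h2)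
end
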